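/- Let T be an infinitely splitting ω₁-tree in which every node has extensions to all higher levels. Then T is a Suslin tree if and only if for every dense, open subset E ⊆ T there exists β < ω₁ such that the entire level T_β is contained in E. -/

import Mathlib

/-!
If `T` is Suslin and `E` is dense open, a maximal antichain inside `E` is countable, so its
heights are bounded by some `β < ω₁`; every node of level `β` lies below a node of `E`, that
node is comparable with a member of the antichain, and the height bound forces the member to
lie below the level-`β` node, which is therefore in `E`.

Conversely, the upward closure of a maximal antichain is dense open, so it contains a level
`T_β`; then no member of the antichain lies above level `β`, and sending each member to a node
of `T_β` above it is injective, so the antichain is countable. A chain `C` is then countable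
because infinite splitting gives every `c ∈ C` an immediate successor lying below no element of
`C`, and these successors form an antichain indexed injectively by `C`.
-/

noncomputable section

open Cardinal Ordinal Set

/-- The height of a node of a tree. -/
noncomputable def treeHt {T : Type*} [PartialOrder T]
    (hwo : ∀ t : T, IsWellOrder {s : T // s < t} (fun a b => (a : T) < (b : T)))
    (t : T) : Ordinal :=
  @Ordinal.type {s : T // s < t} (fun a b => (a : T) < (b : T)) (hwo t)

/-- `ω₁` as an ordinal. -/
noncomputable def w1 : Ordinal := (Cardinal.aleph 1).ord

theorem IsAntichain.exists_maximal_subset {α : Type*} [Preorder α] {s E : Set α}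
    (hs : IsAntichain (· ≤ ·) s) (hsE : s ⊆ E) :
    ∃ t, s ⊆ t ∧ t ⊆ E ∧ IsAntichain (· ≤ ·) t ∧ ∀ x ∈ E, ∃ a ∈ t, a ≤ x ∨ x ≤ a := by
  obtain ⟨t, hst, ⟨htE, ht⟩, hmax⟩ := zorn_subset_nonempty {t | t ⊆ E ∧ IsAntichain (· ≤ ·) t}
    (fun c hc hchain _ => ⟨⋃₀ c, ⟨sUnion_subset fun t htc => (hc htc).1,
      (pairwise_sUnion hchain.directedOn).2 fun t htc => (hc htc).2⟩,
      fun _ => subset_sUnion_of_mem⟩) s ⟨hsE, hs⟩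
  refine ⟨t, hst, htE, ht, fun x hx => ?_⟩
  by_contra! hx'
  have hxt : insert x t ⊆ t := hmax
    ⟨insert_subset hx htE, ht.insert (fun b hb _ => (hx' b hb).1) fun b hb _ => (hx' b hb).2⟩
    (subset_insert x t)
  exact (hx' x (hxt (mem_insert x t))).1 le_rfl

section TreeHeight

variable {T : Type*} [PartialOrder T]
  (hwo : ∀ t : T, IsWellOrder {s : T // s < t} (fun a b => (a : T) < (b : T)))

theorem treeHt_eq_typein {s t : T} (h : s < t) :
    treeHt hwo s =
      @Ordinal.typein {x : T // x < t} (fun a b => (a : T) < (b : T)) (hwo t) ⟨s, h⟩ := by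
  rw [← @Ordinal.type_subrel _ _ (hwo t) ⟨s, h⟩]
  exact Ordinal.type_eq.2 ⟨⟨⟨fun x => ⟨⟨x.1, x.2.trans h⟩, x.2⟩, fun b => ⟨b.1.1, b.2⟩,
    fun _ => rfl, fun _ => rfl⟩, Iff.rfl⟩⟩

theorem treeHt_lt_treeHt {s t : T} (h : s < t) : treeHt hwo s < treeHt hwo t := by
  rw [treeHt_eq_typein hwo h]
  exact Ordinal.typein_lt_type _ _

theorem treeHt_le_treeHt {s t : T} (h : s ≤ t) : treeHt hwo s ≤ treeHt hwo t := by
  rcases h.lt_or_eq with h | rfl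
  · exact (treeHt_lt_treeHt hwo h).le
  · exact le_rfl

theorem exists_le_treeHt_eq {t : T} {β : Ordinal} (h : β ≤ treeHt hwo t) :
    ∃ s ≤ t, treeHt hwo s = β := by
  rcases h.lt_or_eq with h | h
  · obtain ⟨a, ha⟩ := @Ordinal.typein_surj {x : T // x < t}
      (fun a b => (a : T) < (b : T)) (hwo t) β h
    exact ⟨a.1, a.2.le, (treeHt_eq_typein hwo a.2).trans ha⟩
  · exact ⟨t, le_rfl, h.symm⟩

include hwo in
theorem isChain_Iic (t : T) : IsChain (· ≤ ·) (Iic t) := by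
  intro a (ha : a ≤ t) b (hb : b ≤ t) hab
  rcases hb.lt_or_eq with hb | rfl
  · rcases ha.lt_or_eq with ha | rfl
    · rcases @trichotomous _ _ (hwo t).toTrichotomous ⟨a, ha⟩ ⟨b, hb⟩ with h | h | h
      · exact Or.inl h.le
      · exact absurd (congrArg Subtype.val h) hab
      · exact Or.inr h.le
    · exact Or.inr hb.le
  · exact Or.inl ha

theorem le_of_le_of_le_of_treeHt_le {a b t : T} (ha : a ≤ t) (hb : b ≤ t)
    (h : treeHt hwo a ≤ treeHt hwo b) : a ≤ b := by
  rcases (isChain_Iic hwo t).total ha hb with hab | hba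
  · exact hab
  · rcases hba.lt_or_eq with hba | rfl
    · exact absurd h (treeHt_lt_treeHt hwo hba).not_ge
    · exact le_rfl

theorem IsChain.subsingleton_lowerClosure_inter_level {C : Set T} (hC : IsChain (· ≤ ·) C)
    (α : Ordinal) : ((lowerClosure C : Set T) ∩ {s | treeHt hwo s = α}).Subsingleton := by
  suffices ∀ a ∈ lowerClosure C, ∀ b ∈ lowerClosure C, treeHt hwo a = treeHt hwo b → a ≤ b by
    rintro a ⟨ha, rfl⟩ b ⟨hb, hab⟩
    exact (this a ha b hb hab.symm).antisymm (this b hb a ha hab)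
  intro a ha b hb hab
  obtain ⟨c, hcC, hac⟩ := mem_lowerClosure.1 ha
  obtain ⟨d, hdC, hbd⟩ := mem_lowerClosure.1 hb
  rcases hC.total hcC hdC with hcd | hdc
  · exact le_of_le_of_le_of_treeHt_le hwo (hac.trans hcd) hbd hab.le
  · exact le_of_le_of_le_of_treeHt_le hwo hac (hbd.trans hdc) hab.le

theorem exists_treeHt_lt_of_countable (hht : ∀ t : T, treeHt hwo t < w1) {A : Set T}
    (hA : A.Countable) : ∃ β < w1, ∀ a ∈ A, treeHt hwo a < β := by
  have : Countable A := hA.to_subtype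
  have hw : w1 = ω_ 1 := ord_aleph 1
  refine ⟨⨆ a : A, Order.succ (treeHt hwo a), ?_, fun a ha => ?_⟩
  · rw [hw] at hht ⊢
    exact Ordinal.iSup_lt_omega_one fun a => (isSuccLimit_omega 1).succ_lt (hht a)
  · exact (Order.lt_succ _).trans_le
      (Ordinal.le_iSup (fun a : A => Order.succ (treeHt hwo a)) ⟨a, ha⟩)

theorem exists_level_subset_of_isCofinal_of_isUpperSet (hht : ∀ t : T, treeHt hwo t < w1)
    (hanti : ∀ A : Set T, IsAntichain (· ≤ ·) A → A.Countable) {E : Set T}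
    (hdense : IsCofinal E) (hopen : IsUpperSet E) :
    ∃ β < w1, ∀ t, treeHt hwo t = β → t ∈ E := by
  obtain ⟨A, -, hAE, hA, hAmax⟩ := IsAntichain.empty.exists_maximal_subset (empty_subset E)
  obtain ⟨β, hβ, hAβ⟩ := exists_treeHt_lt_of_countable hwo hht (hanti A hA)
  refine ⟨β, hβ, fun t ht => ?_⟩
  obtain ⟨s, hsE, hts⟩ := hdense t
  obtain ⟨a, haA, has | hsa⟩ := hAmax s hsE
  · have hat : a ≤ t := le_of_le_of_le_of_treeHt_le hwo has hts (ht ▸ (hAβ a haA).le)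
    exact hopen hat (hAE haA)
  · have := (treeHt_le_treeHt hwo (hts.trans hsa)).trans_lt (hAβ a haA)
    exact absurd ht this.ne

theorem IsAntichain.countable_of_forall_le_level {β : Ordinal}
    (hlev : {t : T | treeHt hwo t = β}.Countable) {A : Set T} (hA : IsAntichain (· ≤ ·) A)
    (h : ∀ a ∈ A, ∃ t, treeHt hwo t = β ∧ a ≤ t) : A.Countable := by
  refine (hlev.biUnion fun t _ =>
    (inter_subsingleton_of_isAntichain_of_isChain hA (isChain_Iic hwo t)).countable).mono
    fun a ha => ?_
  obtain ⟨t, ht, hat⟩ := h a ha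
  exact mem_biUnion ht ⟨ha, hat⟩

theorem IsAntichain.treeHt_le_of_level_subset_upperClosure {A : Set T}
    (hA : IsAntichain (· ≤ ·) A) {β : Ordinal}
    (hβ : ∀ t, treeHt hwo t = β → t ∈ upperClosure A) {a : T} (ha : a ∈ A) :
    treeHt hwo a ≤ β := by
  by_contra! hlt
  obtain ⟨p, hpa, hp⟩ := exists_le_treeHt_eq hwo hlt.le
  obtain ⟨b, hbA, hbp⟩ := mem_upperClosure.1 (hβ p hp)
  obtain rfl : b = a := hA.eq hbA ha (hbp.trans hpa)
  exact hlt.not_ge (hp ▸ treeHt_le_treeHt hwo hbp)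

theorem IsAntichain.countable_of_forall_exists_level_subset
    (hlevels_countable : ∀ α < w1, Set.Countable {t : T | treeHt hwo t = α})
    (hext : ∀ α β : Ordinal, α < β → β < w1 →
      ∀ t : T, treeHt hwo t = α → ∃ s : T, treeHt hwo s = β ∧ t < s)
    (H : ∀ E : Set T, IsCofinal E → IsUpperSet E → ∃ β < w1, ∀ t, treeHt hwo t = β → t ∈ E)
    {A : Set T} (hA : IsAntichain (· ≤ ·) A) : A.Countable := by
  obtain ⟨A', hAA', -, hA', hmax⟩ := hA.exists_maximal_subset (subset_univ A)
  have hdense : IsCofinal (upperClosure A' : Set T) := fun t => by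
    obtain ⟨a, ha, hat | hta⟩ := hmax t (mem_univ t)
    · exact ⟨t, mem_upperClosure.2 ⟨a, ha, hat⟩, le_rfl⟩
    · exact ⟨a, subset_upperClosure ha, hta⟩
  obtain ⟨β, hβ, hlev⟩ := H _ hdense (upperClosure A').upper
  refine (hA'.countable_of_forall_le_level hwo (hlevels_countable β hβ) fun a ha => ?_).mono hAA'
  rcases (hA'.treeHt_le_of_level_subset_upperClosure hwo hlev ha).lt_or_eq with hlt | heq
  · obtain ⟨t, ht, hat⟩ := hext _ _ hlt hβ a rfl
    exact ⟨t, ht, hat.le⟩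
  · exact ⟨a, heq, le_rfl⟩

theorem IsChain.exists_succ_notMem_lowerClosure {C : Set T} (hC : IsChain (· ≤ ·) C) {c : T}
    (hc : {s : T | c < s ∧ treeHt hwo s = treeHt hwo c + 1}.Infinite) :
    ∃ s, c < s ∧ treeHt hwo s = treeHt hwo c + 1 ∧ s ∉ lowerClosure C := by
  obtain ⟨s, ⟨hcs, hs⟩, hsC⟩ :=
    (hc.sdiff (hC.subsingleton_lowerClosure_inter_level hwo _).finite).nonempty
  exact ⟨s, hcs, hs, fun h => hsC ⟨h, hs⟩⟩

theorem IsChain.countable_of_forall_isAntichain_countable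
    (hsplit : ∀ t : T, {s : T | t < s ∧ treeHt hwo s = treeHt hwo t + 1}.Infinite)
    (hanti : ∀ A : Set T, IsAntichain (· ≤ ·) A → A.Countable)
    {C : Set T} (hC : IsChain (· ≤ ·) C) : C.Countable := by
  choose s hcs hs hsC using fun c => hC.exists_succ_notMem_lowerClosure hwo (hsplit c)
  have hinc : ∀ c ∈ C, ∀ d ∈ C, c ≠ d → ¬ s c ≤ s d := by
    intro c hc d hd hne hle
    rcases hC hc hd hne with hcd | hdc
    · have : treeHt hwo (s c) ≤ treeHt hwo d := by
        rw [hs]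
        exact Order.add_one_le_of_lt (treeHt_lt_treeHt hwo (hcd.lt_of_ne hne))
      exact hsC c <| mem_lowerClosure.2
        ⟨d, hd, le_of_le_of_le_of_treeHt_le hwo hle (hcs d).le this⟩
    · have := treeHt_le_treeHt hwo hle
      rw [hs, hs, ← Order.succ_eq_add_one, ← Order.succ_eq_add_one,
        Order.succ_le_succ_iff] at this
      exact this.not_gt (treeHt_lt_treeHt hwo (hdc.lt_of_ne hne.symm))
  have hinj : InjOn s C := fun c hc d hd h => by_contra fun hne => hinc c hc d hd hne h.le
  refine countable_of_injective_of_countable_image hinj (hanti _ ?_)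
  rintro _ ⟨c, hc, rfl⟩ _ ⟨d, hd, rfl⟩ hne
  exact hinc c hc d hd fun h => hne (h ▸ rfl)

end TreeHeight

theorem suslin_iff_dense_open_contains_level_general {T : Type*} [PartialOrder T]
    (hwo : ∀ t : T, IsWellOrder {s : T // s < t} (fun a b => (a : T) < (b : T)))
    -- `T` is an `ω₁`-tree:
    (hht : ∀ t : T, treeHt hwo t < w1)
    (hlevels_countable : ∀ α < w1, Set.Countable {t : T | treeHt hwo t = α})
    -- every node has extensions to all higher levels:
    (hext : ∀ α β : Ordinal, α < β → β < w1 →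
      ∀ t : T, treeHt hwo t = α → ∃ s : T, treeHt hwo s = β ∧ t < s)
    -- `T` is infinitely splitting:
    (hsplit : ∀ t : T, {s : T | t < s ∧ treeHt hwo s = treeHt hwo t + 1}.Infinite) :
    -- `T` is Suslin ...
    ((∀ C : Set T, IsChain (· ≤ ·) C → C.Countable) ∧
     (∀ A : Set T, (∀ a ∈ A, ∀ b ∈ A, a ≠ b → ¬ a ≤ b ∧ ¬ b ≤ a) → A.Countable))
    ↔
    -- ... iff every dense open subset contains a full level:
    (∀ E : Set T, (∀ t : T, ∃ s ∈ E, t ≤ s) → (∀ t ∈ E, ∀ s : T, t ≤ s → s ∈ E) →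
      ∃ β < w1, ∀ t : T, treeHt hwo t = β → t ∈ E) := by
  have isAntichain_iff (A : Set T) : IsAntichain (· ≤ ·) A ↔
      ∀ a ∈ A, ∀ b ∈ A, a ≠ b → ¬ a ≤ b ∧ ¬ b ≤ a :=
    ⟨fun h a ha b hb hne => ⟨h ha hb hne, h hb ha hne.symm⟩,
      fun h a ha b hb hne => (h a ha b hb hne).1⟩
  constructor
  · rintro ⟨-, hanti⟩ E hdense hopen
    exact exists_level_subset_of_isCofinal_of_isUpperSet hwo hht
      (fun A hA => hanti A ((isAntichain_iff A).1 hA)) hdense fun a b hab ha => hopen a ha b hab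
  · intro H
    have hanti (A : Set T) (hA : IsAntichain (· ≤ ·) A) : A.Countable :=
      hA.countable_of_forall_exists_level_subset hwo hlevels_countable hext
        fun E hdense hopen => H E hdense fun t ht s hts => hopen hts ht
    exact ⟨fun C hC => hC.countable_of_forall_isAntichain_countable hwo hsplit hanti,
      fun A hA => hanti A ((isAntichain_iff A).2 hA)⟩

/-- An infinitely splitting `ω₁`-tree `T` in which every node has extensions
to all higher levels is Suslin (no uncountable branches/chains, no uncountable antichains)
if and only if every dense open subset `E ⊆ T` contains a full level `T_β` for
some `β < ω₁`. -/
theorem suslin_iff_dense_open_contains_level {T : Type*} [PartialOrder T]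
    (hwo : ∀ t : T, IsWellOrder {s : T // s < t} (fun a b => (a : T) < (b : T)))
    -- `T` is an `ω₁`-tree:
    (hht : ∀ t : T, treeHt hwo t < w1)
    (hlevels_countable : ∀ α < w1, Set.Countable {t : T | treeHt hwo t = α})
    (hlevels_ne : ∀ α < w1, ∃ t : T, treeHt hwo t = α)
    -- every node has extensions to all higher levels:
    (hext : ∀ α β : Ordinal, α < β → β < w1 →
      ∀ t : T, treeHt hwo t = α → ∃ s : T, treeHt hwo s = β ∧ t < s)
    -- `T` is infinitely splitting:
    (hsplit : ∀ t : T, {s : T | t < s ∧ treeHt hwo s = treeHt hwo t + 1}.Infinite) :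
    -- `T` is Suslin ...
    ((∀ C : Set T, IsChain (· ≤ ·) C → C.Countable) ∧
     (∀ A : Set T, (∀ a ∈ A, ∀ b ∈ A, a ≠ b → ¬ a ≤ b ∧ ¬ b ≤ a) → A.Countable))
    ↔
    -- ... iff every dense open subset contains a full level:
    (∀ E : Set T, (∀ t : T, ∃ s ∈ E, t ≤ s) → (∀ t ∈ E, ∀ s : T, t ≤ s → s ∈ E) →
      ∃ β < w1, ∀ t : T, treeHt hwo t = β → t ∈ E) :=
  suslin_iff_dense_open_contains_level_general hwo hht hlevels_countable hext hsplit
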